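/- arXiv:2212.11643 — 2 statements merged into one kernel-verified Lean document; each statement's English description precedes it below -/
import Mathlib

section
/- Let G be a simple graph on a finite vertex set and let c₁, …, c_t be a family of t pairwise edge-disjoint odd cycles of G. Then the 2-nullity of the parity Laplacian P(G) satisfies 2-η_P(G) + t + v(G) ≤ e(G) + 2·c(G) (equivalently, 2-η_P(G) ≤ θ(G) − t + c(G) where θ(G) = e(G) − v(G) + c(G)). -/
open Matrix

/-- 2-nullity of a square matrix over 𝔽₂: the dimension of its kernel. -/
noncomputable def nullity2 {m : Type*} [Fintype m] (N : Matrix m m (ZMod 2)) : ℕ :=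
  Module.finrank (ZMod 2) (LinearMap.ker N.mulVecLin)

/-- The parity Laplacian of a graph: the Laplacian reduced mod 2. -/
def parityLap {V : Type*} [Fintype V] [DecidableEq V] (G : SimpleGraph V)
    [DecidableRel G.Adj] : Matrix V V (ZMod 2) :=
  Matrix.of fun u w => if u = w then (G.degree u : ZMod 2) else if G.Adj u w then 1 else 0

namespace ParityAux

variable {V : Type*} [Fintype V] [DecidableEq V] (G : SimpleGraph V) [DecidableRel G.Adj]

/-- The incidence matrix of `G` over `𝔽₂`. -/
def incB : Matrix V G.edgeSet (ZMod 2) :=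
  Matrix.of fun v e => if v ∈ (e : Sym2 V) then 1 else 0

lemma zmod2_add_eq_zero_iff : ∀ a b : ZMod 2, a + b = 0 ↔ a = b := by decide

lemma parityLap_eq : parityLap G = incB G * (incB G)ᵀ := by
  ext u w
  rw [Matrix.mul_apply]
  have hstep : ∀ e : G.edgeSet,
      incB G u e * (incB G)ᵀ e w
        = if u ∈ (e : Sym2 V) ∧ w ∈ (e : Sym2 V) then (1 : ZMod 2) else 0 := by
    intro e
    simp only [incB, transpose_apply, of_apply]
    by_cases h1 : u ∈ (e : Sym2 V) <;> by_cases h2 : w ∈ (e : Sym2 V) <;> simp [h1, h2]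
  rw [Finset.sum_congr rfl fun e _ => hstep e]
  by_cases huw : u = w
  · subst huw
    simp only [and_self]
    rw [Finset.sum_boole]
    have hdeg : (Finset.univ.filter fun e : G.edgeSet => u ∈ (e : Sym2 V)).card
        = G.degree u := by
      rw [← Fintype.card_subtype, ← SimpleGraph.card_incidenceSet_eq_degree G]
      refine Fintype.card_congr ?_
      exact { toFun := fun y => ⟨y.1.1, y.1.2, y.2⟩
              invFun := fun x => ⟨⟨x.1, x.2.1⟩, x.2.2⟩
              left_inv := fun y => rfl
              right_inv := fun x => rfl }
    rw [hdeg]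
    simp [parityLap]
  · simp only [parityLap, of_apply, if_neg huw]
    have hmm : ∀ e : G.edgeSet,
        (u ∈ (e : Sym2 V) ∧ w ∈ (e : Sym2 V)) ↔ (e : Sym2 V) = s(u, w) :=
      fun e => Sym2.mem_and_mem_iff huw
    rw [Finset.sum_congr rfl fun e _ => by rw [if_congr (hmm e) rfl rfl]]
    by_cases hadj : G.Adj u w
    · have he : s(u, w) ∈ G.edgeSet := G.mem_edgeSet.mpr hadj
      rw [if_pos hadj]
      have : ∀ e : G.edgeSet, ((e : Sym2 V) = s(u, w)) ↔ e = ⟨s(u, w), he⟩ := by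
        intro e; constructor
        · intro h; exact Subtype.ext h
        · intro h; rw [h]
      rw [Finset.sum_congr rfl fun e _ => by rw [if_congr (this e) rfl rfl]]
      rw [Finset.sum_ite_eq' Finset.univ (⟨s(u, w), he⟩ : G.edgeSet) (fun _ => (1 : ZMod 2))]
      simp
    · rw [if_neg hadj]
      refine (Finset.sum_eq_zero fun e _ => ?_).symm
      rw [if_neg]
      intro h
      exact hadj (G.mem_edgeSet.mp (h ▸ e.2))

section Walks

variable {G}

lemma sum_indicator_edges {a b : V} (p : G.Walk a b) (hn : p.edges.Nodup)
    (g : Sym2 V → ZMod 2) :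
    (∑ e : G.edgeSet, if (e : Sym2 V) ∈ p.edges then g e else 0) = (p.edges.map g).sum := by
  rw [← Finset.sum_filter]
  rw [← List.sum_toFinset g hn]
  refine Finset.sum_bij (fun e _ => (e : Sym2 V)) ?_ ?_ ?_ ?_
  · intro e he
    simp only [Finset.mem_filter] at he
    simpa [List.mem_toFinset] using he.2
  · intro e₁ h₁ e₂ h₂ h
    exact Subtype.ext h
  · intro e' he'
    simp only [List.mem_toFinset] at he'
    exact ⟨⟨e', p.edges_subset_edgeSet he'⟩, by simp [he'], rfl⟩
  · intro e he; rfl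

lemma walk_sum_edgeVec {a b : V} (p : G.Walk a b) (v : V) :
    (p.edges.map (fun e => if v ∈ e then (1 : ZMod 2) else 0)).sum
      = (if v = a then 1 else 0) + (if v = b then 1 else 0) := by
  induction p with
  | nil => simp only [SimpleGraph.Walk.edges_nil, List.map_nil, List.sum_nil]
           split_ifs <;> decide
  | @cons u c d h q ih =>
      simp only [SimpleGraph.Walk.edges_cons, List.map_cons, List.sum_cons, ih]
      have hac : u ≠ c := h.ne
      have key : (if v ∈ s(u, c) then (1 : ZMod 2) else 0)
          = (if v = u then 1 else 0) + (if v = c then 1 else 0) := by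
        by_cases h1 : v = u <;> by_cases h2 : v = c
        · exact absurd (h1.symm.trans h2) hac
        all_goals simp [Sym2.mem_iff, h1, h2, hac, hac.symm]
      rw [key]
      have harith : ∀ a b c : ZMod 2, a + b + (b + c) = a + c := by decide
      exact harith _ _ _

lemma incB_mulVec_cycle {a : V} (p : G.Walk a a) (hn : p.edges.Nodup) :
    incB G *ᵥ (fun e => if (e : Sym2 V) ∈ p.edges then (1 : ZMod 2) else 0) = 0 := by
  funext v
  show (∑ e : G.edgeSet, incB G v e * if (e : Sym2 V) ∈ p.edges then (1 : ZMod 2) else 0)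
      = 0
  have hstep : ∀ e : G.edgeSet,
      (incB G v e * if (e : Sym2 V) ∈ p.edges then (1 : ZMod 2) else 0)
        = if (e : Sym2 V) ∈ p.edges then (if v ∈ (e : Sym2 V) then (1 : ZMod 2) else 0) else 0 := by
    intro e
    simp only [incB, of_apply]
    by_cases h1 : v ∈ (e : Sym2 V) <;> by_cases h2 : (e : Sym2 V) ∈ p.edges <;> simp [h1, h2]
  rw [Finset.sum_congr rfl fun e _ => hstep e,
    sum_indicator_edges p hn (fun e => if v ∈ e then (1 : ZMod 2) else 0),
    walk_sum_edgeVec p v]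
  split_ifs <;> decide

lemma dot_cycVec_self {a : V} (p : G.Walk a a) (hn : p.edges.Nodup) (ho : Odd p.length) :
    (fun e : G.edgeSet => if (e : Sym2 V) ∈ p.edges then (1 : ZMod 2) else 0) ⬝ᵥ
      (fun e : G.edgeSet => if (e : Sym2 V) ∈ p.edges then (1 : ZMod 2) else 0) = 1 := by
  unfold dotProduct
  have hstep : ∀ e : G.edgeSet,
      ((if (e : Sym2 V) ∈ p.edges then (1 : ZMod 2) else 0) *
        (if (e : Sym2 V) ∈ p.edges then (1 : ZMod 2) else 0))
        = if (e : Sym2 V) ∈ p.edges then (1 : ZMod 2) else 0 := by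
    intro e; by_cases h : (e : Sym2 V) ∈ p.edges <;> simp [h]
  rw [Finset.sum_congr rfl fun e _ => hstep e]
  have := sum_indicator_edges p hn (fun _ => (1 : ZMod 2))
  rw [this]
  have hl : (p.edges.map (fun _ => (1 : ZMod 2))).sum = (p.edges.length : ZMod 2) := by
    rw [List.sum_eq_card_nsmul _ 1 ?_]
    · simp
    · rintro x hx
      obtain ⟨a, -, rfl⟩ := List.mem_map.mp hx
      rfl
  rw [hl, SimpleGraph.Walk.length_edges]
  obtain ⟨k, hk⟩ := ho
  rw [hk, Nat.cast_add, Nat.cast_mul, Nat.cast_one]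
  have h2 : ((2 : ℕ) : ZMod 2) = 0 := by decide
  rw [h2, zero_mul, zero_add]

lemma dot_cycVec_disj {a b : V} (p : G.Walk a a) (q : G.Walk b b)
    (hd : ∀ e, e ∈ p.edges → e ∉ q.edges) :
    (fun e : G.edgeSet => if (e : Sym2 V) ∈ p.edges then (1 : ZMod 2) else 0) ⬝ᵥ
      (fun e : G.edgeSet => if (e : Sym2 V) ∈ q.edges then (1 : ZMod 2) else 0) = 0 := by
  unfold dotProduct
  refine Finset.sum_eq_zero fun e _ => ?_
  change (if (e : Sym2 V) ∈ p.edges then (1 : ZMod 2) else 0) *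
      (if (e : Sym2 V) ∈ q.edges then (1 : ZMod 2) else 0) = 0
  by_cases h1 : (e : Sym2 V) ∈ p.edges
  · rw [if_pos h1, if_neg (hd _ h1), mul_zero]
  · rw [if_neg h1, zero_mul]

end Walks

lemma sum_dotProduct' {ι n : Type*} [Fintype n] (s : Finset ι) (f : ι → n → ZMod 2)
    (g : n → ZMod 2) : (∑ i ∈ s, f i) ⬝ᵥ g = ∑ i ∈ s, f i ⬝ᵥ g := by
  simp only [dotProduct, Finset.sum_apply, Finset.sum_mul]
  exact Finset.sum_comm

lemma range_bt_dot (x : V → ZMod 2) (z : G.edgeSet → ZMod 2) (hz : incB G *ᵥ z = 0) :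
    ((incB G)ᵀ *ᵥ x) ⬝ᵥ z = 0 := by
  rw [dotProduct_comm, dotProduct_mulVec, vecMul_transpose, hz, zero_dotProduct]

lemma bt_mulVec_apply (x : V → ZMod 2) {a b : V} (hab : G.Adj a b) :
    ((incB G)ᵀ *ᵥ x) ⟨s(a, b), G.mem_edgeSet.mpr hab⟩ = x a + x b := by
  show (∑ v : V, (incB G)ᵀ (⟨s(a, b), G.mem_edgeSet.mpr hab⟩ : G.edgeSet) v * x v) = x a + x b
  have hstep : ∀ v : V,
      (incB G)ᵀ (⟨s(a, b), G.mem_edgeSet.mpr hab⟩ : G.edgeSet) v * x v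
        = (if v = a then x v else 0) + (if v = b then x v else 0) := by
    intro v
    simp only [incB, transpose_apply, of_apply, Sym2.mem_iff]
    have hne : a ≠ b := hab.ne
    by_cases h1 : v = a <;> by_cases h2 : v = b
    · exact absurd (h1.symm.trans h2) hne
    all_goals simp [h1, h2, hne, hne.symm]
  rw [Finset.sum_congr rfl fun v _ => hstep v, Finset.sum_add_distrib,
    Finset.sum_ite_eq' Finset.univ a x, Finset.sum_ite_eq' Finset.univ b x]
  simp

lemma ker_bt_iff (x : V → ZMod 2) :
    (incB G)ᵀ *ᵥ x = 0 ↔ ∀ a b : V, G.Adj a b → x a = x b := by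
  constructor
  · intro h a b hab
    have := congrFun h (⟨s(a, b), G.mem_edgeSet.mpr hab⟩ : G.edgeSet)
    rw [bt_mulVec_apply G x hab] at this
    exact (zmod2_add_eq_zero_iff _ _).mp this
  · intro h
    funext e
    obtain ⟨e, he⟩ := e
    induction e with
    | _ a b =>
      have hab : G.Adj a b := G.mem_edgeSet.mp he
      show ((incB G)ᵀ *ᵥ x) ⟨s(a, b), he⟩ = 0
      have : (⟨s(a, b), he⟩ : G.edgeSet) = ⟨s(a, b), G.mem_edgeSet.mpr hab⟩ := rfl
      rw [this, bt_mulVec_apply G x hab]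
      exact (zmod2_add_eq_zero_iff _ _).mpr (h a b hab)

lemma walk_const {x : V → ZMod 2} (h : ∀ a b : V, G.Adj a b → x a = x b) :
    ∀ {a b : V}, G.Walk a b → x a = x b := by
  intro a b p
  induction p with
  | nil => rfl
  | cons hadj q ih => exact (h _ _ hadj).trans ih

lemma finrank_ker_bt :
    Module.finrank (ZMod 2) (LinearMap.ker ((incB G)ᵀ.mulVecLin))
      = Nat.card G.ConnectedComponent := by
  classical
  cases nonempty_fintype G.ConnectedComponent
  set ψ : (G.ConnectedComponent → ZMod 2) →ₗ[ZMod 2] (V → ZMod 2) :=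
    LinearMap.funLeft (ZMod 2) (ZMod 2) G.connectedComponentMk with hψ
  have hinj : Function.Injective ψ :=
    LinearMap.funLeft_injective_of_surjective (ZMod 2) (ZMod 2) _
      (fun c => c.exists_rep)
  have hrange : LinearMap.range ψ = LinearMap.ker ((incB G)ᵀ.mulVecLin) := by
    ext x
    constructor
    · rintro ⟨y, rfl⟩
      simp only [LinearMap.mem_ker, mulVecLin_apply]
      rw [ker_bt_iff]
      intro a b hab
      show y (G.connectedComponentMk a) = y (G.connectedComponentMk b)
      rw [SimpleGraph.ConnectedComponent.connectedComponentMk_eq_of_adj hab]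
    · intro hx
      have hx' : (incB G)ᵀ *ᵥ x = 0 := hx
      have h1 := (ker_bt_iff G x).mp hx'
      refine ⟨SimpleGraph.ConnectedComponent.lift x
        (fun u v p _ => walk_const G h1 p), ?_⟩
      funext v; rfl
  rw [← hrange, LinearMap.finrank_range_of_inj hinj, Module.finrank_pi,
    Nat.card_eq_fintype_card]

end ParityAux

open ParityAux

/-- Splitting the kernel of a composition. -/
lemma finrank_ker_comp {F M₁ M₂ M₃ : Type*} [Field F]
    [AddCommGroup M₁] [Module F M₁] [AddCommGroup M₂] [Module F M₂]
    [AddCommGroup M₃] [Module F M₃] [FiniteDimensional F M₁]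
    (g : M₁ →ₗ[F] M₂) (f : M₂ →ₗ[F] M₃) :
    Module.finrank F (LinearMap.ker (f ∘ₗ g)) =
      Module.finrank F (LinearMap.ker g) +
        Module.finrank F (LinearMap.range g ⊓ LinearMap.ker f : Submodule F M₂) := by
  classical
  set K := LinearMap.ker (f ∘ₗ g) with hK
  have hle : LinearMap.ker g ≤ K := by
    intro x hx
    have hx' : g x = 0 := hx
    simp only [hK, LinearMap.mem_ker, LinearMap.comp_apply, hx', map_zero]
  set φ : K →ₗ[F] M₂ := g ∘ₗ K.subtype with hφ
  have h1 : Module.finrank F (LinearMap.range φ) + Module.finrank F (LinearMap.ker φ)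
      = Module.finrank F K := LinearMap.finrank_range_add_finrank_ker φ
  have hker : LinearMap.ker φ = Submodule.comap K.subtype (LinearMap.ker g) := by
    rw [hφ, LinearMap.ker_comp]
  have h2 : Module.finrank F (LinearMap.ker φ) = Module.finrank F (LinearMap.ker g) := by
    rw [hker]
    exact (Submodule.comapSubtypeEquivOfLe hle).finrank_eq
  have h3 : LinearMap.range φ = LinearMap.range g ⊓ LinearMap.ker f := by
    ext y
    constructor
    · rintro ⟨⟨x, hx⟩, rfl⟩
      refine ⟨⟨x, rfl⟩, ?_⟩
      exact hx
    · rintro ⟨⟨x, rfl⟩, hy⟩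
      refine ⟨⟨x, ?_⟩, rfl⟩
      simpa [hK, LinearMap.mem_ker, LinearMap.comp_apply] using hy
  rw [← h1, h2, h3]
  ring

/-- If `G` has `t` pairwise edge-disjoint odd cycles, then
`2-η_P(G) + t + v(G) ≤ e(G) + 2·c(G)`, i.e. `2-η_P(G) ≤ θ(G) - t + c(G)`. -/
theorem two_nullity_parityLap_add_disjoint_odd_cycles_le {V : Type*} [Fintype V] [DecidableEq V]
    (G : SimpleGraph V) [DecidableRel G.Adj]
    (t : ℕ) (x : Fin t → V) (w : ∀ i, G.Walk (x i) (x i))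
    (hcyc : ∀ i, (w i).IsCycle) (hodd : ∀ i, Odd (w i).length)
    (hdisj : ∀ i j, i ≠ j → ∀ e, e ∈ (w i).edges → e ∉ (w j).edges) :
    nullity2 (parityLap G) + t + Fintype.card V
      ≤ Nat.card G.edgeSet + 2 * Nat.card G.ConnectedComponent := by
  classical
  set F := ZMod 2
  set B := incB G with hB
  set b : (G.edgeSet → F) →ₗ[F] (V → F) := B.mulVecLin with hb
  set bt : (V → F) →ₗ[F] (G.edgeSet → F) := Bᵀ.mulVecLin with hbt
  -- cycle vectors
  set z : Fin t → (G.edgeSet → F) :=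
    fun i e => if (e : Sym2 V) ∈ (w i).edges then (1 : F) else 0 with hz
  have hzker : ∀ i, z i ∈ LinearMap.ker b := by
    intro i
    simp only [LinearMap.mem_ker, hb, mulVecLin_apply]
    exact incB_mulVec_cycle (w i) (hcyc i).edges_nodup
  have hgram : ∀ i j, (z i) ⬝ᵥ (z j) = if i = j then (1 : F) else 0 := by
    intro i j
    by_cases h : i = j
    · subst h
      rw [if_pos rfl]
      exact dot_cycVec_self (w i) (hcyc i).edges_nodup (hodd i)
    · rw [if_neg h]
      exact dot_cycVec_disj (w i) (w j) (hdisj i j h)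
  -- the parity Laplacian factors
  have hfac : (parityLap G).mulVecLin = b ∘ₗ bt := by
    rw [parityLap_eq G, mulVecLin_mul]
  -- kernel splitting
  have hsplit : nullity2 (parityLap G)
      = Module.finrank F (LinearMap.ker bt)
        + Module.finrank F (LinearMap.range bt ⊓ LinearMap.ker b : Submodule F (G.edgeSet → F)) := by
    rw [nullity2, hfac]
    exact finrank_ker_comp bt b
  -- kernel of bt = components
  have hc : Module.finrank F (LinearMap.ker bt) = Nat.card G.ConnectedComponent :=
    finrank_ker_bt G
  -- rank-nullity for bt
  have hrnV : Module.finrank F (LinearMap.range bt) + Module.finrank F (LinearMap.ker bt)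
      = Fintype.card V := by
    rw [LinearMap.finrank_range_add_finrank_ker bt, Module.finrank_pi]
  -- rank-nullity for b
  have hrnE : Module.finrank F (LinearMap.range b) + Module.finrank F (LinearMap.ker b)
      = Fintype.card G.edgeSet := by
    rw [LinearMap.finrank_range_add_finrank_ker b, Module.finrank_pi]
  -- equal ranks
  have hrk : Module.finrank F (LinearMap.range bt) = Module.finrank F (LinearMap.range b) := by
    have := Matrix.rank_transpose B
    simpa [Matrix.rank, hb, hbt] using this
  -- the span of the cycle vectors
  set W : Submodule F (G.edgeSet → F) := Submodule.span F (Set.range z) with hW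
  have hWle : W ≤ LinearMap.ker b := by
    rw [hW, Submodule.span_le]
    rintro _ ⟨i, rfl⟩
    exact hzker i
  have hzli : LinearIndependent F z := by
    rw [Fintype.linearIndependent_iff]
    intro g hg j
    have : (∑ i, g i • z i) ⬝ᵥ z j = 0 := by rw [hg]; exact zero_dotProduct _
    rw [sum_dotProduct'] at this
    simp only [smul_dotProduct, hgram] at this
    simpa using this
  have hWrank : Module.finrank F W = t := by
    rw [hW, finrank_span_eq_card hzli, Fintype.card_fin]
  set U : Submodule F (G.edgeSet → F) := LinearMap.range bt ⊓ LinearMap.ker b with hU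
  have hUW : U ⊓ W = ⊥ := by
    rw [Submodule.eq_bot_iff]
    intro y ⟨hyU, hyW⟩
    obtain ⟨c, hcy⟩ := (Submodule.mem_span_range_iff_exists_fun F).mp hyW
    have hcz : ∀ j, c j = 0 := by
      intro j
      obtain ⟨v, hv⟩ := hyU.1
      have h0 : y ⬝ᵥ z j = 0 := by
        rw [← hv]
        exact range_bt_dot G v (z j) (by simpa [hb, mulVecLin_apply] using hzker j)
      rw [← hcy, sum_dotProduct'] at h0
      simp only [smul_dotProduct, hgram] at h0
      simpa using h0
    rw [← hcy]
    simp [hcz]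
  have hUbound : Module.finrank F U + t ≤ Module.finrank F (LinearMap.ker b) := by
    have h1 := Submodule.finrank_sup_add_finrank_inf_eq U W
    rw [hUW] at h1
    simp only [finrank_bot, add_zero] at h1
    have h2 : U ⊔ W ≤ LinearMap.ker b := sup_le inf_le_right hWle
    calc Module.finrank F U + t = Module.finrank F U + Module.finrank F W := by rw [hWrank]
      _ = Module.finrank F (U ⊔ W : Submodule F (G.edgeSet → F)) := h1.symm
      _ ≤ Module.finrank F (LinearMap.ker b) := Submodule.finrank_mono h2
  -- assemble
  have hcard : Nat.card G.edgeSet = Fintype.card G.edgeSet := Nat.card_eq_fintype_card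
  rw [hsplit, hc, hcard]
  omega
end

section
/- Let G be a simple graph on a finite vertex set and let c₁, …, c_t be a family of t pairwise edge-disjoint odd cycles of G. Then the 2-nullity of the adjacency matrix Ā(G) over 𝔽₂ satisfies 2-η_Ā(G) + t + v(G) ≤ e(G) + v_o(G) + 2·c_e(G) + 2·i(G). -/
open Matrix

/-- The number of odd degree vertices of `G`. -/
noncomputable def oddVertCount {V : Type*} [Fintype V] (G : SimpleGraph V)
    [DecidableRel G.Adj] : ℕ :=
  Nat.card {v : V // Odd (G.degree v)}

/-- The number of connected components of `G` all of whose vertices have even degree. -/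
noncomputable def evenCompCount {V : Type*} [Fintype V] (G : SimpleGraph V)
    [DecidableRel G.Adj] : ℕ :=
  Nat.card {C : G.ConnectedComponent // ∀ v, G.connectedComponentMk v = C → Even (G.degree v)}

/-- `i(G) = 0` if `G` is even and `i(G) = 1` otherwise. -/
def iG {V : Type*} [Fintype V] (G : SimpleGraph V) [DecidableRel G.Adj] : ℕ :=
  if ∀ v, Even (G.degree v) then 0 else 1

private lemma sum_dotProduct' {m ι : Type*} [Fintype m] (s : Finset ι)
    (f : ι → (m → ZMod 2)) (v : m → ZMod 2) :
    (∑ i ∈ s, f i) ⬝ᵥ v = ∑ i ∈ s, f i ⬝ᵥ v := by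
  classical
  induction s using Finset.induction with
  | empty => simp
  | @insert _ _ h ih => simp [Finset.sum_insert h, add_dotProduct, ih]

private lemma key_lin {n m : Type*} [Fintype n] [Fintype m] [DecidableEq n] [DecidableEq m]
    {t : ℕ} (M : Matrix n m (ZMod 2)) (z : Fin t → (m → ZMod 2))
    (hz : ∀ i, M *ᵥ z i = 0)
    (hzz : ∀ i, z i ⬝ᵥ z i = 1)
    (hzo : ∀ i j, i ≠ j → z i ⬝ᵥ z j = 0) :
    nullity2 (M * Mᵀ) + t + Fintype.card n
      ≤ Fintype.card m + 2 * Module.finrank (ZMod 2) (LinearMap.ker Mᵀ.mulVecLin) := by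
  classical
  set ψ : (m → ZMod 2) →ₗ[ZMod 2] (n → ZMod 2) := M.mulVecLin with hψdef
  set φ : (n → ZMod 2) →ₗ[ZMod 2] (m → ZMod 2) := Mᵀ.mulVecLin with hφdef
  -- the radical of the dot-product form on ker ψ
  let R : Submodule (ZMod 2) (m → ZMod 2) :=
    { carrier := {v | v ∈ LinearMap.ker ψ ∧ ∀ y ∈ LinearMap.ker ψ, v ⬝ᵥ y = 0}
      add_mem' := by
        rintro a b ⟨ha, ha'⟩ ⟨hb, hb'⟩
        exact ⟨add_mem ha hb, fun y hy => by rw [add_dotProduct, ha' y hy, hb' y hy, add_zero]⟩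
      zero_mem' := ⟨zero_mem _, fun y _ => zero_dotProduct y⟩
      smul_mem' := by
        rintro c a ⟨ha, ha'⟩
        exact ⟨Submodule.smul_mem _ c ha, fun y hy => by
          rw [smul_dotProduct, ha' y hy, smul_zero]⟩ }
  have hzker : ∀ i, z i ∈ LinearMap.ker ψ := fun i => by
    show M.mulVecLin (z i) = 0
    rw [Matrix.mulVecLin_apply]; exact hz i
  -- Step A : nullity2 (M * Mᵀ) ≤ finrank (ker φ) + finrank R
  have hcomp : (M * Mᵀ).mulVecLin = ψ ∘ₗ φ := Matrix.mulVecLin_mul M Mᵀ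
  have hA : nullity2 (M * Mᵀ) ≤
      Module.finrank (ZMod 2) R + Module.finrank (ZMod 2) (LinearMap.ker φ) := by
    set K0 := LinearMap.ker ((M * Mᵀ).mulVecLin) with hK0
    set f : K0 →ₗ[ZMod 2] (m → ZMod 2) := φ.domRestrict K0 with hf
    have h1 := LinearMap.finrank_range_add_finrank_ker f
    have h2 : Module.finrank (ZMod 2) (LinearMap.range f) ≤ Module.finrank (ZMod 2) R := by
      apply Submodule.finrank_mono
      rintro v ⟨⟨x, hx⟩, rfl⟩
      have hx' : ψ (φ x) = 0 := by
        rw [hK0, LinearMap.mem_ker, hcomp] at hx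
        exact hx
      refine ⟨hx', fun y hy => ?_⟩
      show (Mᵀ *ᵥ x) ⬝ᵥ y = 0
      rw [Matrix.mulVec_transpose, ← Matrix.dotProduct_mulVec,
        show M *ᵥ y = 0 from hy, dotProduct_zero]
    have h3 : Module.finrank (ZMod 2) (LinearMap.ker f) ≤
        Module.finrank (ZMod 2) (LinearMap.ker φ) := by
      have hker : ∀ x : LinearMap.ker f, (x : K0).1 ∈ LinearMap.ker φ := by
        rintro ⟨⟨x, hx0⟩, hx⟩
        have : f ⟨x, hx0⟩ = 0 := hx
        exact this
      let g : LinearMap.ker f →ₗ[ZMod 2] LinearMap.ker φ :=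
        LinearMap.codRestrict _ ((K0.subtype).comp (LinearMap.ker f).subtype) hker
      have hginj : Function.Injective g := by
        intro a b hab
        have h1 := congrArg (Subtype.val : LinearMap.ker φ → (n → ZMod 2)) hab
        have h2 : ((a : K0) : n → ZMod 2) = ((b : K0) : n → ZMod 2) := h1
        exact Subtype.ext (Subtype.ext h2)
      exact LinearMap.finrank_le_finrank_of_injective hginj
    have : nullity2 (M * Mᵀ) = Module.finrank (ZMod 2) K0 := rfl
    omega
  -- Step B : finrank R + t ≤ finrank (ker ψ)
  have hB : Module.finrank (ZMod 2) R + t ≤ Module.finrank (ZMod 2) (LinearMap.ker ψ) := by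
    set U := Submodule.span (ZMod 2) (Set.range z) with hU
    have hUker : U ≤ LinearMap.ker ψ := Submodule.span_le.2 (by
      rintro _ ⟨i, rfl⟩; exact hzker i)
    have hRker : R ≤ LinearMap.ker ψ := fun v hv => hv.1
    have hLI : LinearIndependent (ZMod 2) z := by
      rw [Fintype.linearIndependent_iff]
      intro g hg i
      have h := congrArg (fun v => v ⬝ᵥ z i) hg
      simp only [zero_dotProduct] at h
      rw [sum_dotProduct'] at h
      rw [Finset.sum_eq_single i (fun j _ hj => by
          rw [smul_dotProduct, hzo j i hj, smul_zero])
        (by intro h'; exact absurd (Finset.mem_univ i) h')] at h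
      rw [smul_dotProduct, hzz i, smul_eq_mul, mul_one] at h
      exact h
    have hfU : Module.finrank (ZMod 2) U = t := by
      rw [hU, finrank_span_eq_card hLI, Fintype.card_fin]
    have hRU : R ⊓ U = ⊥ := by
      rw [eq_bot_iff]
      intro v hv
      obtain ⟨hvR, hvU⟩ := (Submodule.mem_inf).1 hv
      rw [hU, Submodule.mem_span_range_iff_exists_fun] at hvU
      obtain ⟨c, rfl⟩ := hvU
      have hc : ∀ i, c i = 0 := by
        intro i
        have h := hvR.2 (z i) (hzker i)
        rw [sum_dotProduct'] at h
        rw [Finset.sum_eq_single i (fun j _ hj => by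
            rw [smul_dotProduct, hzo j i hj, smul_zero])
          (by intro h'; exact absurd (Finset.mem_univ i) h')] at h
        rwa [smul_dotProduct, hzz i, smul_eq_mul, mul_one] at h
      have : ∑ i, c i • z i = 0 := by
        simp [funext hc]
      rw [this]; exact Submodule.zero_mem ⊥
    have hsup := Submodule.finrank_sup_add_finrank_inf_eq R U
    rw [hRU] at hsup
    have hle : Module.finrank (ZMod 2) (R ⊔ U : Submodule (ZMod 2) (m → ZMod 2)) ≤
        Module.finrank (ZMod 2) (LinearMap.ker ψ) :=
      Submodule.finrank_mono (sup_le hRker hUker)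
    simp only [finrank_bot, add_zero] at hsup
    omega
  -- Step C : rank-nullity
  have hCm : Module.finrank (ZMod 2) (LinearMap.range ψ) + Module.finrank (ZMod 2) (LinearMap.ker ψ)
      = Fintype.card m := by
    rw [LinearMap.finrank_range_add_finrank_ker ψ, Module.finrank_pi]
  have hCn : Module.finrank (ZMod 2) (LinearMap.range φ) + Module.finrank (ZMod 2) (LinearMap.ker φ)
      = Fintype.card n := by
    rw [LinearMap.finrank_range_add_finrank_ker φ, Module.finrank_pi]
  have hCr : Module.finrank (ZMod 2) (LinearMap.range φ) = Module.finrank (ZMod 2) (LinearMap.range ψ) :=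
    Matrix.rank_transpose M
  omega


private lemma list_sum_ite_count {α : Type*} [DecidableEq α] (l : List α) (a : α) :
    (l.map (fun x => if a = x then (1 : ZMod 2) else 0)).sum = (l.count a : ZMod 2) := by
  induction l with
  | nil => simp
  | cons b l ih =>
    by_cases h : a = b
    · subst h; simp [List.count_cons, ih, add_comm]
    · simp [List.count_cons, ih, h, Ne.symm h]

private lemma odd_cast_zmod2 {n : ℕ} (h : Odd n) : (n : ZMod 2) = 1 := by
  obtain ⟨k, rfl⟩ := h
  push_cast
  have : (2 : ZMod 2) = 0 := by decide
  rw [this]; ring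

private lemma even_cast_zmod2 {n : ℕ} (h : Even n) : (n : ZMod 2) = 0 := by
  obtain ⟨k, rfl⟩ := h
  push_cast
  have : (2 : ZMod 2) = 0 := by decide
  ring_nf
  rw [mul_comm, this]; ring

private lemma zmod2_add_eq_zero {a b : ZMod 2} (h : a + b = 0) : a = b := by
  revert h; revert a b; decide

section Graph
variable {V : Type*} [Fintype V] [DecidableEq V] (G : SimpleGraph V) [DecidableRel G.Adj]

private abbrev oddT (G : SimpleGraph V) [DecidableRel G.Adj] : Type _ := {v : V // Odd (G.degree v)}

/-- the halved incidence matrix -/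
private def Bmat : Matrix V (G.edgeSet ⊕ oddT G) (ZMod 2) := fun v ε =>
  Sum.elim (fun e : G.edgeSet => if v ∈ (e : Sym2 V) then 1 else 0)
    (fun u : oddT G => if v = u.1 then 1 else 0) ε

private lemma adj_eq_BBt : G.adjMatrix (ZMod 2) = Bmat G * (Bmat G)ᵀ := by
  classical
  ext u v
  rw [Matrix.mul_apply]
  rw [Fintype.sum_sum_type]
  have hsub := Finset.sum_subtype (p := fun e : Sym2 V => e ∈ G.edgeSet) (F := (inferInstance : Fintype G.edgeSet)) G.edgeFinset
    (fun e => SimpleGraph.mem_edgeFinset) (fun e => (if u ∈ e then (1:ZMod 2) else 0) * (if v ∈ e then 1 else 0))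
  have h1 : ∑ e : G.edgeSet, Bmat G u (Sum.inl e) * (Bmat G)ᵀ (Sum.inl e) v
      = ∑ e ∈ G.edgeFinset, (if u ∈ e then (1:ZMod 2) else 0) * (if v ∈ e then 1 else 0) := by
    rw [hsub]; rfl
  have h2 : ∑ o : oddT G, Bmat G u (Sum.inr o) * (Bmat G)ᵀ (Sum.inr o) v
      = ∑ o : oddT G, (if u = o.1 then (1:ZMod 2) else 0) * (if v = o.1 then 1 else 0) := rfl
  rw [h1, h2]
  by_cases huv : u = v
  · subst huv
    -- diagonal
    have hd1 : ∑ e ∈ G.edgeFinset, (if u ∈ e then (1:ZMod 2) else 0) * (if u ∈ e then 1 else 0)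
        = (G.degree u : ZMod 2) := by
      have hstep : ∑ e ∈ G.edgeFinset, (if u ∈ e then (1:ZMod 2) else 0) * (if u ∈ e then 1 else 0)
          = ∑ e ∈ G.edgeFinset, (if u ∈ e then (1:ZMod 2) else 0) :=
        Finset.sum_congr rfl (fun e _ => by by_cases h : u ∈ e <;> simp [h])
      rw [hstep, Finset.sum_boole]
      rw [← SimpleGraph.incidenceFinset_eq_filter, SimpleGraph.card_incidenceFinset_eq_degree]
    have hd2 : ∑ o : oddT G, (if u = o.1 then (1:ZMod 2) else 0) * (if u = o.1 then 1 else 0)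
        = if Odd (G.degree u) then 1 else 0 := by
      have hstep : ∑ o : oddT G, (if u = o.1 then (1:ZMod 2) else 0) * (if u = o.1 then 1 else 0)
          = ∑ o : oddT G, (if u = o.1 then (1:ZMod 2) else 0) :=
        Finset.sum_congr rfl (fun o _ => by by_cases h : u = o.1 <;> simp [h])
      rw [hstep, ← Finset.sum_subtype (p := fun v : V => Odd (G.degree v)) (Finset.univ.filter (fun v => Odd (G.degree v)))
        (fun x => by simp) (fun x => if u = x then (1:ZMod 2) else 0)]
      rw [Finset.sum_ite_eq]
      simp
    rw [hd1, hd2, SimpleGraph.adjMatrix_apply]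
    simp only [SimpleGraph.irrefl, if_false]
    rcases Nat.even_or_odd (G.degree u) with he | ho
    · rw [even_cast_zmod2 he, if_neg (by exact (Nat.not_odd_iff_even).2 he), add_zero]
    · rw [odd_cast_zmod2 ho, if_pos ho]; decide
  · -- off-diagonal
    have hd2 : ∑ o : oddT G, (if u = o.1 then (1:ZMod 2) else 0) * (if v = o.1 then 1 else 0) = 0 := by
      apply Finset.sum_eq_zero
      intro o _
      by_cases h : u = o.1
      · rw [if_pos h, if_neg (fun hv : v = ↑o => huv (h.trans hv.symm)), mul_zero]
      · rw [if_neg h]; ring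
    have hd1 : ∑ e ∈ G.edgeFinset, (if u ∈ e then (1:ZMod 2) else 0) * (if v ∈ e then 1 else 0)
        = if G.Adj u v then 1 else 0 := by
      have : ∀ e ∈ G.edgeFinset, (if u ∈ e then (1:ZMod 2) else 0) * (if v ∈ e then 1 else 0)
          = if s(u,v) = e then 1 else 0 := by
        intro e _
        by_cases h : u ∈ e ∧ v ∈ e
        · rw [if_pos h.1, if_pos h.2, if_pos (((Sym2.mem_and_mem_iff huv).1 h).symm), one_mul]
        · have hne : ¬ s(u,v) = e := fun he => h ((Sym2.mem_and_mem_iff huv).2 he.symm)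
          rw [if_neg hne]
          rcases not_and_or.1 h with h' | h'
          · rw [if_neg h', zero_mul]
          · rw [if_neg h', mul_zero]
      rw [Finset.sum_congr rfl this, Finset.sum_ite_eq]
      simp [SimpleGraph.mem_edgeFinset, SimpleGraph.mem_edgeSet]
    rw [hd1, hd2, SimpleGraph.adjMatrix_apply, add_zero]

private def zvec {u : V} (p : G.Walk u u) : (G.edgeSet ⊕ oddT G) → ZMod 2 :=
  Sum.elim (fun e : G.edgeSet => if (e : Sym2 V) ∈ p.edges then 1 else 0) 0

private def dartVec (d : G.Dart) : (G.edgeSet ⊕ oddT G) → ZMod 2 :=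
  Pi.single (Sum.inl ⟨d.edge, d.edge_mem⟩) 1

private lemma list_sum_apply {ι : Type*} (ε : ι) (l : List (ι → ZMod 2)) :
    l.sum ε = (l.map (fun f => f ε)).sum :=
  map_list_sum (Pi.evalAddMonoidHom (fun _ : ι => ZMod 2) ε) l

private lemma zvec_eq_sum {u : V} (p : G.Walk u u) (hnd : p.edges.Nodup) :
    zvec G p = (p.darts.map (dartVec G)).sum := by
  classical
  funext ε
  rw [list_sum_apply, List.map_map]
  cases ε with
  | inr o =>
    have : ∀ d : G.Dart, dartVec G d (Sum.inr o) = 0 := fun d => by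
      simp [dartVec, Pi.single_apply]
    simp only [Function.comp_def, this]
    simp [zvec]
  | inl e =>
    have hterm : ∀ d : G.Dart, dartVec G d (Sum.inl e) =
        if (e : Sym2 V) = d.edge then 1 else 0 := by
      intro d
      rw [dartVec, Pi.single_apply]
      congr 1
      simp only [eq_iff_iff]
      constructor
      · rintro h
        have := Sum.inl.injEq (α := G.edgeSet) (β := oddT G) _ _ ▸ h
        exact congrArg Subtype.val (Sum.inl_injective h)
      · intro h
        congr 1
        exact Subtype.ext h
    simp only [Function.comp_def, hterm]
    have : List.map (fun d : G.Dart => if (e : Sym2 V) = d.edge then (1 : ZMod 2) else 0) p.darts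
        = List.map (fun x : Sym2 V => if (e : Sym2 V) = x then (1 : ZMod 2) else 0) p.edges := by
      show _ = List.map _ (p.darts.map SimpleGraph.Dart.edge)
      rw [List.map_map]
      rfl
    rw [this, list_sum_ite_count]
    show (if (e : Sym2 V) ∈ p.edges then (1 : ZMod 2) else 0) = _
    by_cases hmem : (e : Sym2 V) ∈ p.edges
    · rw [if_pos hmem, List.count_eq_one_of_mem hnd hmem]; rfl
    · rw [if_neg hmem, List.count_eq_zero.2 hmem]; rfl

private lemma mulVec_dartVec (d : G.Dart) :
    Bmat G *ᵥ dartVec G d = Pi.single d.toProd.1 1 + Pi.single d.toProd.2 1 := by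
  classical
  rw [dartVec, Matrix.mulVec_single]
  funext v
  have hne : d.toProd.1 ≠ d.toProd.2 := d.adj.ne
  have hmem : v ∈ d.edge ↔ v = d.toProd.1 ∨ v = d.toProd.2 := by
    show v ∈ Sym2.mk d.toProd.1 d.toProd.2 ↔ _
    rw [← Prod.mk.eta (p := d.toProd)]
    exact Sym2.mem_iff
  show (if v ∈ d.edge then (1 : ZMod 2) else 0) * 1 = _
  rw [mul_one]
  simp only [Pi.add_apply, Pi.single_apply]
  by_cases h1 : v = d.toProd.1
  · rw [if_pos (hmem.2 (Or.inl h1)), if_pos h1, if_neg (h1 ▸ hne), add_zero]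
  · by_cases h2 : v = d.toProd.2
    · rw [if_pos (hmem.2 (Or.inr h2)), if_neg h1, if_pos h2, zero_add]
    · rw [if_neg (fun h => by rcases hmem.1 h with h' | h' <;> [exact h1 h'; exact h2 h']),
        if_neg h1, if_neg h2, add_zero]

private lemma support_dropLast_perm_tail {u : V} (p : G.Walk u u) :
    p.support.dropLast.Perm p.support.tail := by
  have hne : p.support ≠ [] := p.support_ne_nil
  have h1 := List.dropLast_append_getLast hne
  rw [SimpleGraph.Walk.getLast_support p] at h1
  have h2 : p.support = u :: p.support.tail := p.support_eq_cons
  have hperm : (p.support.dropLast ++ [u]).Perm (p.support.tail ++ [u]) := by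
    rw [h1, h2]
    exact (List.perm_append_singleton u _).symm
  exact (List.perm_append_right_iff _).1 hperm

private lemma mulVec_zvec_eq_zero {u : V} (p : G.Walk u u) (hnd : p.edges.Nodup) :
    Bmat G *ᵥ zvec G p = 0 := by
  classical
  have h0 : Bmat G *ᵥ zvec G p = (Bmat G).mulVecLin (zvec G p) := rfl
  rw [h0, zvec_eq_sum G p hnd, map_list_sum, List.map_map]
  have hterm : ((Bmat G).mulVecLin ∘ dartVec G) =
      fun d : G.Dart => Pi.single d.toProd.1 (1 : ZMod 2) + Pi.single d.toProd.2 1 := by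
    funext d
    exact mulVec_dartVec G d
  rw [hterm, List.sum_map_add]
  have hfst : List.map (fun d : G.Dart => Pi.single d.toProd.1 (1 : ZMod 2)) p.darts
      = List.map (fun x : V => Pi.single x (1 : ZMod 2)) p.support.dropLast := by
    rw [← SimpleGraph.Walk.map_fst_darts, List.map_map]; rfl
  have hsnd : List.map (fun d : G.Dart => Pi.single d.toProd.2 (1 : ZMod 2)) p.darts
      = List.map (fun x : V => Pi.single x (1 : ZMod 2)) p.support.tail := by
    rw [← SimpleGraph.Walk.map_snd_darts, List.map_map]; rfl
  rw [hfst, hsnd,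
    List.Perm.sum_eq (List.Perm.map _ (support_dropLast_perm_tail G p))]
  funext v
  simp only [Pi.add_apply, Pi.zero_apply]
  exact CharTwo.add_self_eq_zero _

private lemma list_sum_dotProduct {ι : Type*} [Fintype ι] (l : List (ι → ZMod 2)) (v : ι → ZMod 2) :
    l.sum ⬝ᵥ v = (l.map (fun y => y ⬝ᵥ v)).sum :=
  map_list_sum (AddMonoidHom.mk' (fun y => y ⬝ᵥ v) (fun a b => add_dotProduct a b v)) l

private lemma zvec_dot_self {u : V} (p : G.Walk u u) (hnd : p.edges.Nodup)
    (hodd : Odd p.length) : zvec G p ⬝ᵥ zvec G p = 1 := by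
  classical
  nth_rewrite 1 [zvec_eq_sum G p hnd]
  rw [list_sum_dotProduct, List.map_map]
  have hterm : ∀ d ∈ p.darts, ((fun y => y ⬝ᵥ zvec G p) ∘ dartVec G) d = 1 := by
    intro d hd
    show dartVec G d ⬝ᵥ zvec G p = 1
    rw [dartVec, single_dotProduct, one_mul]
    exact if_pos (show d.edge ∈ p.edges from List.mem_map_of_mem (f := SimpleGraph.Dart.edge) hd)
  rw [List.map_congr_left hterm]
  have : List.map (fun _ : G.Dart => (1 : ZMod 2)) p.darts
    = List.replicate p.darts.length 1 := List.map_const'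
  rw [List.map_const', List.sum_replicate, SimpleGraph.Walk.length_darts, nsmul_eq_mul, mul_one]
  exact odd_cast_zmod2 hodd

private lemma zvec_dot_other {u₁ u₂ : V} (p : G.Walk u₁ u₁) (q : G.Walk u₂ u₂)
    (hnd : p.edges.Nodup)
    (hdisj : ∀ e ∈ p.edges, e ∉ q.edges) : zvec G p ⬝ᵥ zvec G q = 0 := by
  classical
  nth_rewrite 1 [zvec_eq_sum G p hnd]
  rw [list_sum_dotProduct, List.map_map]
  have hterm : ∀ d ∈ p.darts, ((fun y => y ⬝ᵥ zvec G q) ∘ dartVec G) d = 0 := by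
    intro d hd
    show dartVec G d ⬝ᵥ zvec G q = 0
    rw [dartVec, single_dotProduct, one_mul]
    exact if_neg (hdisj d.edge (show d.edge ∈ p.edges from List.mem_map_of_mem (f := SimpleGraph.Dart.edge) hd))
  rw [List.map_congr_left hterm, List.map_const', List.sum_replicate, smul_zero]


set_option maxHeartbeats 1000000 in
private lemma kerBt_le : Module.finrank (ZMod 2)
    (LinearMap.ker ((Bmat G)ᵀ.mulVecLin)) ≤ evenCompCount G := by
  classical
  set Ce := {C : G.ConnectedComponent // ∀ v, G.connectedComponentMk v = C → Even (G.degree v)}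
    with hCe
  haveI : Fintype Ce := Fintype.ofFinite _
  have hker : ∀ y : V → ZMod 2, (Bmat G)ᵀ *ᵥ y = 0 →
      (∀ a b, G.Adj a b → y a = y b) ∧ (∀ v, Odd (G.degree v) → y v = 0) := by
    intro y hy
    constructor
    · intro a b hab
      have h := congrFun hy (Sum.inl ⟨s(a,b), (G.mem_edgeSet).2 hab⟩)
      have hne : a ≠ b := hab.ne
      have hsum : ∑ v : V, (if v ∈ s(a,b) then (1 : ZMod 2) else 0) * y v = y a + y b := by
        have hstep : ∀ v : V, (if v ∈ s(a,b) then (1 : ZMod 2) else 0) * y v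
            = if v ∈ ({a, b} : Finset V) then y v else 0 := by
          intro v
          by_cases hv : v ∈ s(a,b)
          · rw [if_pos hv, one_mul, if_pos (by
              rcases Sym2.mem_iff.1 hv with h' | h' <;> simp [h'])]
          · rw [if_neg hv, zero_mul, if_neg (by
              intro hm
              apply hv
              rcases Finset.mem_insert.1 hm with h' | h'
              · exact Sym2.mem_iff.2 (Or.inl h')
              · exact Sym2.mem_iff.2 (Or.inr (Finset.mem_singleton.1 h')))]
        rw [Finset.sum_congr rfl (fun v _ => hstep v), Finset.sum_ite_mem,
          Finset.univ_inter, Finset.sum_pair hne]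
      have h0 : y a + y b = 0 := by
        rw [← hsum]
        simpa [Matrix.mulVec, dotProduct, Bmat] using h
      exact zmod2_add_eq_zero h0
    · intro v hv
      have h := congrFun hy (Sum.inr ⟨v, hv⟩)
      have h' : ∑ u : V, (if u = v then (1 : ZMod 2) else 0) * y u = 0 := by
        simpa [Matrix.mulVec, dotProduct, Bmat] using h
      have hstep : ∀ u : V, (if u = v then (1 : ZMod 2) else 0) * y u
          = if u = v then y u else 0 := by
        intro u; by_cases hu : u = v <;> simp [hu]
      rw [Finset.sum_congr rfl (fun u _ => hstep u)] at h'
      simpa using h'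
  let g : LinearMap.ker ((Bmat G)ᵀ.mulVecLin) →ₗ[ZMod 2] (Ce → ZMod 2) :=
    { toFun := fun y C => (y : V → ZMod 2) C.1.out
      map_add' := fun a b => rfl
      map_smul' := fun c a => rfl }
  have hker0 : ∀ y : LinearMap.ker ((Bmat G)ᵀ.mulVecLin), g y = 0 → y = 0 := by
    rintro ⟨y, hy⟩ h0
    have hy' : (Bmat G)ᵀ *ᵥ y = 0 := hy
    obtain ⟨hadj, hoddv⟩ := hker y hy'
    have hreach : ∀ a b, G.Reachable a b → y a = y b := by
      intro a b hr
      obtain ⟨pw⟩ := hr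
      induction pw with
      | nil => rfl
      | cons h q ih => exact (hadj _ _ h).trans ih
    apply Subtype.ext
    funext v
    show y v = 0
    by_cases hc : ∀ u, G.connectedComponentMk u = G.connectedComponentMk v → Even (G.degree u)
    · have h1 : y (G.connectedComponentMk v).out = 0 := congrFun h0 ⟨G.connectedComponentMk v, hc⟩
      have h2 : G.Reachable v (G.connectedComponentMk v).out :=
        SimpleGraph.ConnectedComponent.exact ((G.connectedComponentMk v).out_eq).symm
      rw [hreach v _ h2, h1]
    · push_neg at hc
      obtain ⟨u, hu1, hu2⟩ := hc
      rw [hreach v u (SimpleGraph.ConnectedComponent.exact hu1.symm)]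
      exact hoddv u (Nat.not_even_iff_odd.1 hu2)
  have hginj : Function.Injective g := by
    apply LinearMap.ker_eq_bot.1
    rw [eq_bot_iff]
    intro y hy
    exact hker0 y (LinearMap.mem_ker.1 hy)
  have hle := LinearMap.finrank_le_finrank_of_injective hginj
  rw [Module.finrank_pi] at hle
  have hcount : evenCompCount G = Fintype.card Ce := by
    rw [← Nat.card_eq_fintype_card]
    rfl
  rw [hcount]
  exact hle

end Graph

/-- If `G` has `t` pairwise edge-disjoint odd cycles, then
`2-η_Ā(G) + t + v(G) ≤ e(G) + v_o(G) + 2·c_e(G) + 2·i(G)`. -/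
theorem two_nullity_adj_le {V : Type*} [Fintype V] [DecidableEq V]
    (G : SimpleGraph V) [DecidableRel G.Adj]
    (t : ℕ) (x : Fin t → V) (w : ∀ i, G.Walk (x i) (x i))
    (hcyc : ∀ i, (w i).IsCycle) (hodd : ∀ i, Odd (w i).length)
    (hdisj : ∀ i j, i ≠ j → ∀ e, e ∈ (w i).edges → e ∉ (w j).edges) :
    nullity2 (G.adjMatrix (ZMod 2)) + t + Fintype.card V
      ≤ Nat.card G.edgeSet + oddVertCount G + 2 * evenCompCount G + 2 * iG G := by
  classical
  have hnd : ∀ i, (w i).edges.Nodup := fun i => (hcyc i).isTrail.edges_nodup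
  let z : Fin t → (G.edgeSet ⊕ oddT G) → ZMod 2 := fun i => zvec G (w i)
  have hz : ∀ i, Bmat G *ᵥ z i = 0 := fun i => mulVec_zvec_eq_zero G (w i) (hnd i)
  have hzz : ∀ i, z i ⬝ᵥ z i = 1 := fun i => zvec_dot_self G (w i) (hnd i) (hodd i)
  have hzo : ∀ i j, i ≠ j → z i ⬝ᵥ z j = 0 := fun i j hij =>
    zvec_dot_other G (w i) (w j) (hnd i) (fun e he => hdisj i j hij e he)
  have hkey := key_lin (Bmat G) z hz hzz hzo
  rw [← adj_eq_BBt] at hkey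
  have hcard : Fintype.card (G.edgeSet ⊕ oddT G) = Nat.card G.edgeSet + oddVertCount G := by
    rw [Fintype.card_sum, Nat.card_eq_fintype_card, oddVertCount, Nat.card_eq_fintype_card]
  have hce := kerBt_le G
  omega
end
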